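/- arXiv:1908.07097 — 6 statements merged into one kernel-verified Lean document; each statement's English description precedes it below -/
import Mathlib

section
/- Let n ≥ 24 and let m be a natural number with m ≤ (n/(48e))², where e = exp(1). Let X₁, …, X_m be independent random points, each uniformly distributed on the unit square [0,1]² ⊆ ℝ². Then with probability at least 1 − 8·4^{−n/12}, the random set {X₁, …, X_m} contains no monotone subset of cardinality ⌊n/12⌋. -/
open MeasureTheory

/-- All points of `S` have pairwise distinct x-coordinates and pairwise distinct
y-coordinates. -/
def DistinctCoords (S : Set (ℝ × ℝ)) : Prop :=
  ∀ p ∈ S, ∀ q ∈ S, p ≠ q → p.1 ≠ q.1 ∧ p.2 ≠ q.2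

/-- `S` is increasing: larger x-coordinate implies larger y-coordinate. -/
def IncreasingPts (S : Set (ℝ × ℝ)) : Prop :=
  ∀ p ∈ S, ∀ q ∈ S, p.1 < q.1 → p.2 < q.2

/-- `S` is decreasing: larger x-coordinate implies smaller y-coordinate. -/
def DecreasingPts (S : Set (ℝ × ℝ)) : Prop :=
  ∀ p ∈ S, ∀ q ∈ S, p.1 < q.1 → q.2 < p.2

/-- `S` is monotone: it has pairwise distinct x- and y-coordinates and is either
increasing or decreasing. -/
def MonotonePts (S : Set (ℝ × ℝ)) : Prop :=
  DistinctCoords S ∧ (IncreasingPts S ∨ DecreasingPts S)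

/-- The uniform probability measure on the unit square `[0,1]² ⊆ ℝ²`. -/
noncomputable def unifSquare : Measure (ℝ × ℝ) :=
  volume.restrict (Set.Icc (0 : ℝ) 1 ×ˢ Set.Icc (0 : ℝ) 1)

/-! List a monotone `k`-subset by increasing x-coordinate: it becomes an injective `k`-tuple of the
sample whose x-coordinates increase and whose y-coordinates increase or decrease. For a fixed tuple
of independent uniform points, the x- and y-coordinates form two independent i.i.d. samples, and
all `k!` relative orders of an i.i.d. sample are equally likely, so the tuple is monotone with
probability at most `2 / k!²`. A union bound over the at most `m^k` tuples, together with
`k! ≥ (k/e)^k`, bounds the failure probability by `2 (m e² / k²)^k ≤ 2 · 4^{-k}`, and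
`k = ⌊n/12⌋ > n/12 - 1`. -/

open ProbabilityTheory
open scoped ENNReal Nat

lemma ProbabilityTheory.iIndepFun.map_comp_embedding_eq_pi {Ω ι κ β : Type*} [MeasurableSpace Ω]
    [MeasurableSpace β] [Fintype κ] {μ : Measure Ω} [IsProbabilityMeasure μ] {X : ι → Ω → β}
    (hindep : iIndepFun X μ) (hmeas : ∀ i, Measurable (X i)) {ν : Measure β}
    (hlaw : ∀ i, μ.map (X i) = ν) (g : κ ↪ ι) :
    μ.map (fun ω j ↦ X (g j) ω) = Measure.pi fun _ ↦ ν := by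
  rw [(hindep.precomp g.injective).map_fun_eq_pi_map fun j ↦ (hmeas (g j)).aemeasurable]
  simp only [hlaw]

section StrictMonoPerm

variable {α : Type*} [LinearOrder α] {k : ℕ}

lemma pairwiseDisjoint_setOf_strictMono_comp :
    Set.univ.PairwiseDisjoint
      fun σ : Equiv.Perm (Fin k) ↦ {u : Fin k → α | StrictMono (u ∘ σ)} := by
  intro σ _ τ _ hne
  refine Set.disjoint_left.2 fun u (hσ : StrictMono (u ∘ σ)) (hτ : StrictMono (u ∘ τ)) ↦ hne ?_
  have : StrictMono (τ.symm ∘ σ) := fun a b hab ↦ hτ.lt_iff_lt.1 (by simpa using hσ hab)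
  simpa [Equiv.symm_comp_eq] using this.eq_id

def xSortedYPattern (σ : Equiv.Perm (Fin k)) : Set (Fin k → α × α) :=
  {p | StrictMono (fun j ↦ (p j).1) ∧ StrictMono (fun j ↦ (p (σ j)).2)}

variable [MeasurableSpace α]

lemma xSortedYPattern_eq_preimage (σ : Equiv.Perm (Fin k)) :
    xSortedYPattern σ = MeasurableEquiv.arrowProdEquivProdArrow α α (Fin k) ⁻¹'
      ({u | StrictMono (u ∘ (1 : Equiv.Perm (Fin k)))} ×ˢ {v | StrictMono (v ∘ σ)}) :=
  rfl

variable [TopologicalSpace α] [OrderClosedTopology α] [SecondCountableTopology α]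
  [OpensMeasurableSpace α]

lemma measurableSet_setOf_strictMono_comp (σ : Equiv.Perm (Fin k)) :
    MeasurableSet {u : Fin k → α | StrictMono (u ∘ σ)} := by
  simp only [StrictMono, Function.comp_apply, Set.ofPred_forall]
  exact .iInter fun a ↦ .iInter fun b ↦ .iInter fun _ ↦
    measurableSet_lt (measurable_pi_apply _) (measurable_pi_apply _)

lemma measure_pi_setOf_strictMono_comp (ν : Measure α) [SigmaFinite ν]
    (σ : Equiv.Perm (Fin k)) :
    Measure.pi (fun _ ↦ ν) {u : Fin k → α | StrictMono (u ∘ σ)} =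
      Measure.pi (fun _ ↦ ν) {u : Fin k → α | StrictMono u} := by
  have hpre : MeasurableEquiv.piCongrLeft (fun _ ↦ α) σ ⁻¹' {u | StrictMono (u ∘ σ)} =
      {u | StrictMono u} := by
    ext u
    simp [Function.comp_def, MeasurableEquiv.coe_piCongrLeft, Equiv.piCongrLeft_apply_apply]
  rw [← hpre, (measurePreserving_piCongrLeft (fun _ ↦ ν) σ).measure_preimage
    (measurableSet_setOf_strictMono_comp σ).nullMeasurableSet]

/-- The `k!` events `StrictMono (u ∘ σ)` are disjoint and, by exchangeability, equally likely. -/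
lemma measure_pi_setOf_strictMono_comp_le (ν : Measure α) [IsProbabilityMeasure ν]
    (σ : Equiv.Perm (Fin k)) :
    Measure.pi (fun _ ↦ ν) {u : Fin k → α | StrictMono (u ∘ σ)} ≤ (k ! : ℝ≥0∞)⁻¹ := by
  have hsum : ∑ τ : Equiv.Perm (Fin k),
      Measure.pi (fun _ ↦ ν) {u : Fin k → α | StrictMono (u ∘ τ)} ≤ 1 := by
    rw [← measure_biUnion_finset
      (pairwiseDisjoint_setOf_strictMono_comp.subset (Set.subset_univ _))
      fun τ _ ↦ measurableSet_setOf_strictMono_comp τ]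
    exact prob_le_one
  simp only [measure_pi_setOf_strictMono_comp, Finset.sum_const, Finset.card_univ,
    Fintype.card_perm, Fintype.card_fin, nsmul_eq_mul] at hsum
  rwa [measure_pi_setOf_strictMono_comp, ENNReal.le_inv_iff_mul_le, mul_comm]

lemma measurableSet_xSortedYPattern (σ : Equiv.Perm (Fin k)) :
    MeasurableSet (xSortedYPattern (α := α) σ) := by
  rw [xSortedYPattern_eq_preimage]
  exact MeasurableEquiv.measurable _
    ((measurableSet_setOf_strictMono_comp 1).prod (measurableSet_setOf_strictMono_comp σ))

lemma measure_pi_prod_xSortedYPattern_le (ν₁ ν₂ : Measure α) [IsProbabilityMeasure ν₁]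
    [IsProbabilityMeasure ν₂] (σ : Equiv.Perm (Fin k)) :
    Measure.pi (fun _ ↦ ν₁.prod ν₂) (xSortedYPattern σ) ≤ (k ! : ℝ≥0∞)⁻¹ ^ 2 := by
  rw [xSortedYPattern_eq_preimage, (measurePreserving_arrowProdEquivProdArrow α α (Fin k)
    (fun _ ↦ ν₁) (fun _ ↦ ν₂)).measure_preimage ((measurableSet_setOf_strictMono_comp 1).prod
    (measurableSet_setOf_strictMono_comp σ)).nullMeasurableSet, Measure.prod_prod]
  exact (mul_le_mul' (measure_pi_setOf_strictMono_comp_le ν₁ 1)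
    (measure_pi_setOf_strictMono_comp_le ν₂ σ)).trans_eq (sq _).symm

lemma measure_preimage_xSortedYPattern_le {Ω ι : Type*} [MeasurableSpace Ω] {μ : Measure Ω}
    [IsProbabilityMeasure μ] {X : ι → Ω → α × α} (hindep : iIndepFun X μ)
    (hmeas : ∀ i, Measurable (X i)) {ν₁ ν₂ : Measure α} [IsProbabilityMeasure ν₁]
    [IsProbabilityMeasure ν₂] (hlaw : ∀ i, μ.map (X i) = ν₁.prod ν₂) (g : Fin k ↪ ι)
    (σ : Equiv.Perm (Fin k)) :
    μ ((fun ω j ↦ X (g j) ω) ⁻¹' xSortedYPattern σ) ≤ (k ! : ℝ≥0∞)⁻¹ ^ 2 := by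
  rw [← Measure.map_apply (by fun_prop) (measurableSet_xSortedYPattern σ),
    hindep.map_comp_embedding_eq_pi hmeas hlaw]
  exact measure_pi_prod_xSortedYPattern_le ν₁ ν₂ σ

end StrictMonoPerm

instance : IsProbabilityMeasure (volume.restrict (Set.Icc (0 : ℝ) 1)) :=
  ⟨by simp⟩

lemma unifSquare_eq_prod :
    unifSquare = (volume.restrict (Set.Icc (0 : ℝ) 1)).prod (volume.restrict (Set.Icc 0 1)) := by
  rw [unifSquare, Measure.prod_restrict, ← Measure.volume_eq_prod]

lemma DistinctCoords.exists_strictMono_fst {S : Finset (ℝ × ℝ)} {k : ℕ} (hS : DistinctCoords ↑S)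
    (hk : S.card = k) : ∃ p : Fin k → ℝ × ℝ, (∀ j, p j ∈ S) ∧ StrictMono fun j ↦ (p j).1 := by
  let q := (S.map toLex.toEmbedding).orderEmbOfFin ((S.card_map _).trans hk)
  have hmem : ∀ j, ofLex (q j) ∈ S := fun j ↦ by
    simpa using (S.map toLex.toEmbedding).orderEmbOfFin_mem ((S.card_map _).trans hk) j
  refine ⟨fun j ↦ ofLex (q j), hmem, fun a b hab ↦ ?_⟩
  -- `q` is sorted lexicographically, and distinct points never share an x-coordinate
  rcases Prod.Lex.lt_iff.1 (q.strictMono hab) with h | ⟨h, -⟩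
  · exact h
  · exact absurd h (hS _ (hmem a) _ (hmem b) (by simpa using hab.ne)).1

lemma MonotonePts.exists_mem_xSortedYPattern {S : Finset (ℝ × ℝ)} {k : ℕ} (hS : MonotonePts ↑S)
    (hk : S.card = k) : ∃ p : Fin k → ℝ × ℝ, (∀ j, p j ∈ S) ∧
      (p ∈ xSortedYPattern 1 ∨ p ∈ xSortedYPattern Fin.revPerm) := by
  obtain ⟨hdist, hinc | hdec⟩ := hS <;> obtain ⟨p, hpS, hp⟩ := hdist.exists_strictMono_fst hk
  · exact ⟨p, hpS, .inl ⟨hp, fun a b hab ↦ hinc _ (hpS a) _ (hpS b) (hp hab)⟩⟩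
  · exact ⟨p, hpS, .inr ⟨hp, fun a b hab ↦
      hdec _ (hpS _) _ (hpS _) (hp (Fin.rev_lt_rev.2 hab))⟩⟩

lemma exists_embedding_comp_eq {ι κ β : Type*} {x : ι → β} {p : κ → β}
    (hp : p.Injective) (hx : ∀ j, p j ∈ Set.range x) : ∃ g : κ ↪ ι, x ∘ g = p := by
  choose g hg using hx
  exact ⟨⟨g, fun a b hab ↦ hp (by rw [← hg a, ← hg b, hab])⟩, funext hg⟩

lemma MonotonePts.exists_embedding_comp_mem_xSortedYPattern {ι : Type*} {x : ι → ℝ × ℝ}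
    {S : Finset (ℝ × ℝ)} {k : ℕ} (hS : MonotonePts ↑S) (hSx : ↑S ⊆ Set.range x)
    (hk : S.card = k) : ∃ g : Fin k ↪ ι,
      x ∘ g ∈ xSortedYPattern 1 ∨ x ∘ g ∈ xSortedYPattern Fin.revPerm := by
  obtain ⟨p, hpS, hp⟩ := hS.exists_mem_xSortedYPattern hk
  have hinj : p.Injective := by rcases hp with h | h <;> exact h.1.injective.of_comp
  obtain ⟨g, rfl⟩ := exists_embedding_comp_eq hinj fun j ↦ hSx (hpS j)
  exact ⟨g, hp⟩

lemma measure_exists_monotonePts_le {Ω ι : Type*} [Fintype ι] [MeasurableSpace Ω]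
    {μ : Measure Ω} [IsProbabilityMeasure μ] {X : ι → Ω → ℝ × ℝ} (hindep : iIndepFun X μ)
    (hmeas : ∀ i, Measurable (X i)) {ν₁ ν₂ : Measure ℝ} [IsProbabilityMeasure ν₁]
    [IsProbabilityMeasure ν₂] (hlaw : ∀ i, μ.map (X i) = ν₁.prod ν₂) (k : ℕ) :
    μ {ω | ∃ S : Finset (ℝ × ℝ), ↑S ⊆ Set.range (fun i ↦ X i ω) ∧ S.card = k ∧
      MonotonePts (↑S : Set (ℝ × ℝ))} ≤ Fintype.card ι ^ k * (2 * (k ! : ℝ≥0∞)⁻¹ ^ 2) := by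
  classical
  let E (g : Fin k ↪ ι) (σ : Equiv.Perm (Fin k)) : Set Ω :=
    (fun ω j ↦ X (g j) ω) ⁻¹' xSortedYPattern σ
  have hcover : {ω | ∃ S : Finset (ℝ × ℝ), ↑S ⊆ Set.range (fun i ↦ X i ω) ∧ S.card = k ∧
      MonotonePts (↑S : Set (ℝ × ℝ))} ⊆ ⋃ g, (E g 1 ∪ E g Fin.revPerm) := by
    rintro ω ⟨S, hSX, hk, hS⟩
    obtain ⟨g, hg⟩ := hS.exists_embedding_comp_mem_xSortedYPattern hSX hk
    exact Set.mem_iUnion.2 ⟨g, hg⟩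
  calc _ ≤ ∑ g, (μ (E g 1) + μ (E g Fin.revPerm)) :=
        (measure_mono hcover).trans <| (measure_iUnion_fintype_le μ _).trans <|
          Finset.sum_le_sum fun g _ ↦ measure_union_le _ _
    _ ≤ ∑ _g : Fin k ↪ ι, 2 * (k ! : ℝ≥0∞)⁻¹ ^ 2 := by
        gcongr with g
        rw [two_mul]
        exact add_le_add (measure_preimage_xSortedYPattern_le hindep hmeas hlaw g 1)
          (measure_preimage_xSortedYPattern_le hindep hmeas hlaw g Fin.revPerm)
    _ ≤ Fintype.card ι ^ k * (2 * (k ! : ℝ≥0∞)⁻¹ ^ 2) := by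
        rw [Finset.sum_const, Finset.card_univ, Fintype.card_embedding_eq, Fintype.card_fin,
          nsmul_eq_mul]
        gcongr
        exact_mod_cast Nat.descFactorial_le_pow _ k

lemma inv_factorial_le_exp_div_pow (k : ℕ) : (k ! : ℝ)⁻¹ ≤ (Real.exp 1 / k) ^ k := by
  rcases k.eq_zero_or_pos with rfl | hk
  · simp
  have h := Real.pow_div_factorial_le_exp (k : ℝ) k.cast_nonneg k
  rw [← Real.exp_one_pow, div_le_iff₀ (by positivity)] at h
  rw [div_pow, le_div_iff₀ (by positivity), inv_mul_le_iff₀ (by positivity)]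
  linarith

lemma two_mul_pow_mul_inv_factorial_sq_le {n m : ℕ} (hn : 24 ≤ n)
    (hm : (m : ℝ) ≤ ((n : ℝ) / (48 * Real.exp 1)) ^ 2) :
    2 * (m : ℝ) ^ (n / 12) * ((n / 12)! : ℝ)⁻¹ ^ 2 ≤ 8 * (4 : ℝ) ^ (-(n : ℝ) / 12) := by
  set k := n / 12
  have hk : (0 : ℝ) < k := by norm_cast; omega
  have hnk : (n : ℝ) ≤ 24 * k := by norm_cast; omega
  have hnk' : (n : ℝ) < 12 * (k + 1) := by norm_cast; omega
  have hbase : (m : ℝ) * (Real.exp 1 / k) ^ 2 ≤ 4⁻¹ := calc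
    (m : ℝ) * (Real.exp 1 / k) ^ 2 ≤ ((n : ℝ) / (48 * Real.exp 1)) ^ 2 * (Real.exp 1 / k) ^ 2 := by
        gcongr
    _ = ((n : ℝ) / (48 * k)) ^ 2 := by field_simp
    _ ≤ (1 / 2) ^ 2 := by gcongr ?_ ^ 2; rw [div_le_iff₀ (by positivity)]; linarith
    _ = 4⁻¹ := by norm_num
  calc 2 * (m : ℝ) ^ k * (k ! : ℝ)⁻¹ ^ 2
      ≤ 2 * (m : ℝ) ^ k * ((Real.exp 1 / k) ^ k) ^ 2 := by
        gcongr; exact inv_factorial_le_exp_div_pow k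
    _ = 2 * ((m : ℝ) * (Real.exp 1 / k) ^ 2) ^ k := by ring
    _ ≤ 2 * (4⁻¹) ^ k := by gcongr
    _ = 8 * (4 : ℝ) ^ (-((k : ℝ) + 1)) := by
        rw [Real.rpow_neg (by norm_num), ← Nat.cast_add_one, Real.rpow_natCast, inv_pow, pow_succ]
        ring
    _ ≤ 8 * (4 : ℝ) ^ (-(n : ℝ) / 12) := by
        gcongr
        · norm_num
        · linarith

lemma ofReal_one_sub_le_prob_compl {Ω : Type*} [MeasurableSpace Ω] {μ : Measure Ω}
    [IsProbabilityMeasure μ] {s : Set Ω} {ε : ℝ} (hε : 0 ≤ ε) (hs : μ s ≤ ENNReal.ofReal ε) :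
    ENNReal.ofReal (1 - ε) ≤ μ sᶜ := by
  rw [ENNReal.ofReal_sub _ hε, ENNReal.ofReal_one, tsub_le_iff_left, ← measure_univ (μ := μ)]
  exact (measure_univ_le_add_compl s).trans (by gcongr)

theorem stmt0 (n m : ℕ) (hn : 24 ≤ n)
    (hm : (m : ℝ) ≤ ((n : ℝ) / (48 * Real.exp 1)) ^ 2)
    {Ω : Type*} [MeasurableSpace Ω] (μ : Measure Ω) [IsProbabilityMeasure μ]
    (X : Fin m → Ω → ℝ × ℝ) (hmeas : ∀ i, Measurable (X i))
    (hindep : ProbabilityTheory.iIndepFun X μ)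
    (hlaw : ∀ i, Measure.map (X i) μ = unifSquare) :
    ENNReal.ofReal (1 - 8 * (4 : ℝ) ^ (-(n : ℝ) / 12)) ≤
      μ {ω | ¬ ∃ S : Finset (ℝ × ℝ),
        (↑S : Set (ℝ × ℝ)) ⊆ Set.range (fun i => X i ω) ∧
        S.card = n / 12 ∧ MonotonePts (↑S : Set (ℝ × ℝ))} := by
  set k := n / 12
  rw [← Set.compl_ofPred]
  refine ofReal_one_sub_le_prob_compl (by positivity) ?_
  calc _ ≤ (m : ℝ≥0∞) ^ k * (2 * (k ! : ℝ≥0∞)⁻¹ ^ 2) := by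
        simpa using measure_exists_monotonePts_le hindep hmeas
          (fun i ↦ (hlaw i).trans unifSquare_eq_prod) k
    _ = ENNReal.ofReal (2 * (m : ℝ) ^ k * (k ! : ℝ)⁻¹ ^ 2) := by
        rw [ENNReal.ofReal_mul (by positivity), ENNReal.ofReal_mul (by positivity),
          ENNReal.ofReal_pow (by positivity), ENNReal.ofReal_pow (by positivity),
          ENNReal.ofReal_inv_of_pos (by positivity)]
        simp only [ENNReal.ofReal_ofNat, ENNReal.ofReal_natCast]
        ring
    _ ≤ _ := ENNReal.ofReal_le_ofReal (two_mul_pow_mul_inv_factorial_sq_le hn hm)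
end

section
/- Let n ≥ 24 and let m be a natural number with m ≤ (n/(48e))², where e = exp(1), and set ℓ = ⌊n/12⌋. If π is a permutation of {1, …, m} chosen uniformly at random, then the probability that π contains a monotone subsequence of length ℓ is at most 8·4^{−n/12}. -/
/-- The permutation `π` of `Fin m` contains a monotone subsequence of length `ℓ`:
there is a strictly increasing `f : Fin ℓ → Fin m` such that `π ∘ f` is strictly
monotone increasing or strictly monotone decreasing. -/
def HasMonotoneSubseq {m : ℕ} (π : Equiv.Perm (Fin m)) (ℓ : ℕ) : Prop :=
  ∃ f : Fin ℓ → Fin m, StrictMono f ∧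
    (StrictMono (fun i => π (f i)) ∨ StrictAnti (fun i => π (f i)))

open Finset Nat

lemma image_perm_compl {m : ℕ} (π : Equiv.Perm (Fin m)) (s : Finset (Fin m)) :
    s.image π = (sᶜ.image π)ᶜ := by
  ext b
  simp only [mem_image, mem_compl]
  constructor
  · rintro ⟨a, ha, rfl⟩ ⟨c, hc, hcb⟩
    exact hc (π.injective hcb ▸ ha)
  · intro h
    refine ⟨π.symm b, ?_, π.apply_symm_apply b⟩
    by_contra hc
    exact h ⟨π.symm b, hc, π.apply_symm_apply b⟩

lemma orderEmbOfFin_congr' {α : Type*} [LinearOrder α] {s t : Finset α} {k : ℕ}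
    (h : s = t) (hs : s.card = k) (ht : t.card = k) :
    ⇑(s.orderEmbOfFin hs) = ⇑(t.orderEmbOfFin ht) := by subst h; rfl

lemma card_inc_le (m ℓ : ℕ) :
    Nat.card {π : Equiv.Perm (Fin m) |
        ∃ f : Fin ℓ → Fin m, StrictMono f ∧ StrictMono (fun i => π (f i))}
      ≤ m.choose ℓ * m.descFactorial (m - ℓ) := by
  classical
  set A : Set (Equiv.Perm (Fin m)) :=
    {π | ∃ f : Fin ℓ → Fin m, StrictMono f ∧ StrictMono (fun i => π (f i))} with hA
  have hch : ∀ x : A, ∃ f : Fin ℓ → Fin m,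
      StrictMono f ∧ StrictMono (fun i => (x : Equiv.Perm (Fin m)) (f i)) := fun x => x.2
  choose F hF1 hF2 using hch
  set S : A → Finset (Fin m) := fun x => univ.map ⟨F x, (hF1 x).injective⟩ with hS
  have hSmem : ∀ (x : A) i, F x i ∈ S x := fun x i => by simp [hS]
  have hScard : ∀ x, (S x).card = ℓ := fun x => by simp [hS]
  have hCcard : ∀ x, (S x)ᶜ.card = m - ℓ := fun x => by
    rw [card_compl, hScard, Fintype.card_fin]
  have hFeq : ∀ x : A, F x = (S x).orderEmbOfFin (hScard x) :=
    fun x => orderEmbOfFin_unique (hScard x) (hSmem x) (hF1 x)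
  set Φ : A → {s : Finset (Fin m) // s.card = ℓ} × (Fin (m - ℓ) ↪ Fin m) :=
    fun x => (⟨S x, hScard x⟩,
      ((S x)ᶜ.orderEmbOfFin (hCcard x)).toEmbedding.trans
        (x : Equiv.Perm (Fin m)).toEmbedding) with hΦdef
  have hΦ : Function.Injective Φ := by
    rintro x y hxy
    have h1 : S x = S y := congrArg (fun p => (p.1 : Finset (Fin m))) hxy
    have h2 :  ∀ i, (x : Equiv.Perm (Fin m)) ((S x)ᶜ.orderEmbOfFin (hCcard x) i)
        = (y : Equiv.Perm (Fin m)) ((S y)ᶜ.orderEmbOfFin (hCcard y) i) := by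
      intro i
      have := congrArg (fun p => p.2 i) hxy
      simpa [hΦdef] using this
    -- agreement on the complement
    have hcompl : ∀ a ∈ (S x)ᶜ, (x : Equiv.Perm (Fin m)) a = (y : Equiv.Perm (Fin m)) a := by
      intro a ha
      have : a ∈ Set.range ((S x)ᶜ.orderEmbOfFin (hCcard x)) := by
        rw [range_orderEmbOfFin]; exact_mod_cast ha
      obtain ⟨i, rfl⟩ := this
      have h2' := h2 i
      have he : ((S y)ᶜ.orderEmbOfFin (hCcard y) : Fin (m - ℓ) → Fin m)
          = ((S x)ᶜ.orderEmbOfFin (hCcard x) : Fin (m - ℓ) → Fin m) :=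
        orderEmbOfFin_congr' (by rw [h1]) _ _
      rw [he] at h2'
      exact h2'
    -- images of the complement agree
    have himg : (S x)ᶜ.image (x : Equiv.Perm (Fin m)) = (S x)ᶜ.image (y : Equiv.Perm (Fin m)) :=
      Finset.image_congr hcompl
    -- images of S agree
    have himgS : (S x).image (x : Equiv.Perm (Fin m)) = (S x).image (y : Equiv.Perm (Fin m)) := by
      have hx := image_perm_compl (x : Equiv.Perm (Fin m)) (S x)
      have hy := image_perm_compl (y : Equiv.Perm (Fin m)) (S x)
      rw [hx, hy, himg]
    have hcardimg : ((S x).image (x : Equiv.Perm (Fin m))).card = ℓ := by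
      rw [Finset.card_image_of_injective _ (x : Equiv.Perm (Fin m)).injective, hScard]
    -- F y maps into S x, so equals the same orderEmbOfFin
    have hFxy : F x = F y := by
      rw [hFeq x, hFeq y]
      exact orderEmbOfFin_congr' h1 _ _
    -- both π ∘ F are the increasing enumeration of the same image
    have hgx : (fun i => (x : Equiv.Perm (Fin m)) (F x i))
        = ((S x).image (x : Equiv.Perm (Fin m))).orderEmbOfFin hcardimg :=
      orderEmbOfFin_unique hcardimg
        (fun i => Finset.mem_image_of_mem _ (hSmem x i)) (hF2 x)
    have hcardimg' : ((S x).image (y : Equiv.Perm (Fin m))).card = ℓ := by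
      rw [← himgS]; exact hcardimg
    have hgy : (fun i => (y : Equiv.Perm (Fin m)) (F y i))
        = ((S x).image (y : Equiv.Perm (Fin m))).orderEmbOfFin hcardimg' := by
      apply orderEmbOfFin_unique
      · intro i
        apply Finset.mem_image_of_mem
        rw [hFxy] at *
        have := hSmem y i
        rwa [← h1] at this
      · exact hF2 y
    -- conclude equality on S x
    have hSagree : ∀ a ∈ S x, (x : Equiv.Perm (Fin m)) a = (y : Equiv.Perm (Fin m)) a := by
      intro a ha
      obtain ⟨i, _, rfl⟩ : ∃ i ∈ univ, F x i = a := by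
        simpa [hS, Finset.mem_map] using ha
      have e1 := congrFun hgx i
      have e2 := congrFun hgy i
      rw [← hFxy] at e2
      rw [e1, e2]
      exact congrFun (orderEmbOfFin_congr' himgS _ _) i
    apply Subtype.ext
    apply Equiv.ext
    intro a
    by_cases ha : a ∈ S x
    · exact hSagree a ha
    · exact hcompl a (Finset.mem_compl.mpr ha)
  calc Nat.card A
      ≤ Nat.card ({s : Finset (Fin m) // s.card = ℓ} × (Fin (m - ℓ) ↪ Fin m)) :=
        Nat.card_le_card_of_injective Φ hΦ
    _ = m.choose ℓ * m.descFactorial (m - ℓ) := by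
        rw [Nat.card_eq_fintype_card, Fintype.card_prod, Fintype.card_finset_len,
          Fintype.card_embedding_eq, Fintype.card_fin, Fintype.card_fin]

lemma card_mono_le (m ℓ : ℕ) :
    Nat.card {π : Equiv.Perm (Fin m) | HasMonotoneSubseq π ℓ}
      ≤ 2 * (m.choose ℓ * m.descFactorial (m - ℓ)) := by
  classical
  set A : Set (Equiv.Perm (Fin m)) :=
    {π | ∃ f : Fin ℓ → Fin m, StrictMono f ∧ StrictMono (fun i => π (f i))} with hA
  set B : Set (Equiv.Perm (Fin m)) :=
    {π | ∃ f : Fin ℓ → Fin m, StrictMono f ∧ StrictAnti (fun i => π (f i))} with hB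
  have hsets : {π : Equiv.Perm (Fin m) | HasMonotoneSubseq π ℓ} = A ∪ B := by
    ext π
    simp only [Set.mem_setOf_eq, Set.mem_union, HasMonotoneSubseq, hA, hB]
    constructor
    · rintro ⟨f, hf, hmono | hanti⟩
      · exact Or.inl ⟨f, hf, hmono⟩
      · exact Or.inr ⟨f, hf, hanti⟩
    · rintro (⟨f, hf, hmono⟩ | ⟨f, hf, hanti⟩)
      · exact ⟨f, hf, Or.inl hmono⟩
      · exact ⟨f, hf, Or.inr hanti⟩
  have hBA : Nat.card B ≤ Nat.card A := by
    apply Nat.card_le_card_of_injective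
      (f := fun x : B => (⟨Fin.revPerm * (x : Equiv.Perm (Fin m)), by
        obtain ⟨f, hf, hanti⟩ := x.2
        refine ⟨f, hf, fun i j hij => ?_⟩
        simp only [Equiv.Perm.mul_apply, Fin.revPerm_apply]
        exact Fin.rev_lt_rev.mpr (hanti hij)⟩ : A))
    intro a b hab
    have := congrArg (fun z : A => (z : Equiv.Perm (Fin m))) hab
    exact Subtype.ext (mul_left_cancel this)
  calc Nat.card {π : Equiv.Perm (Fin m) | HasMonotoneSubseq π ℓ}
      = (A ∪ B).ncard := by rw [hsets, Nat.card_coe_set_eq]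
    _ ≤ A.ncard + B.ncard := Set.ncard_union_le A B
    _ = Nat.card A + Nat.card B := by rw [Nat.card_coe_set_eq, Nat.card_coe_set_eq]
    _ ≤ 2 * (m.choose ℓ * m.descFactorial (m - ℓ)) := by
        have h1 := card_inc_le m ℓ
        rw [← hA] at h1
        omega

set_option maxHeartbeats 2000000 in
theorem stmt1 (n m : ℕ) (hn : 24 ≤ n)
    (hm : (m : ℝ) ≤ ((n : ℝ) / (48 * Real.exp 1)) ^ 2) :
    (Nat.card {π : Equiv.Perm (Fin m) | HasMonotoneSubseq π (n / 12)} : ℝ) /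
        (Nat.factorial m : ℝ) ≤ 8 * (4 : ℝ) ^ (-(n : ℝ) / 12) := by
  have he : (0:ℝ) < Real.exp 1 := Real.exp_pos 1
  set ℓ : ℕ := n / 12 with hℓ
  have hℓ2 : 2 ≤ ℓ := by omega
  have hrpos : (0:ℝ) < 8 * (4 : ℝ) ^ (-(n : ℝ) / 12) := by positivity
  by_cases hml : ℓ ≤ m
  swap
  · have hempty : {π : Equiv.Perm (Fin m) | HasMonotoneSubseq π ℓ} = ∅ := by
      ext π
      simp only [Set.mem_setOf_eq, Set.mem_empty_iff_false, iff_false]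
      rintro ⟨f, hf, -⟩
      have := Fintype.card_le_of_injective f hf.injective
      simp only [Fintype.card_fin] at this
      omega
    have h0 : Nat.card {π : Equiv.Perm (Fin m) | HasMonotoneSubseq π ℓ} = 0 := by
      rw [hempty]; simp
    rw [h0, Nat.cast_zero, zero_div]
    exact hrpos.le
  -- main case
  have key := card_mono_le m ℓ
  rw [show m.descFactorial (m - ℓ) = (m - ℓ)! * m.choose ℓ by
    rw [Nat.descFactorial_eq_factorial_mul_choose, Nat.choose_symm hml]] at key
  have hfact : m.choose ℓ * ℓ ! * (m - ℓ)! = m ! := Nat.choose_mul_factorial_mul_factorial hml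
  set E : ℝ := Real.exp 1 with hE
  set c : ℝ := (m.choose ℓ : ℝ) with hc
  set fl : ℝ := ((ℓ)! : ℝ) with hfl
  set fml : ℝ := ((m - ℓ)! : ℝ) with hfml
  set fm : ℝ := ((m)! : ℝ) with hfm
  set L : ℝ := (ℓ : ℝ) with hL
  have hcpos : (0:ℝ) < c := by rw [hc]; exact_mod_cast Nat.choose_pos hml
  have hflpos : (0:ℝ) < fl := by rw [hfl]; exact_mod_cast Nat.factorial_pos ℓ
  have hfmlpos : (0:ℝ) < fml := by rw [hfml]; exact_mod_cast Nat.factorial_pos (m - ℓ)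
  have hfmpos : (0:ℝ) < fm := by rw [hfm]; exact_mod_cast Nat.factorial_pos m
  have hLpos : (0:ℝ) < L := by
    rw [hL]; exact_mod_cast Nat.lt_of_lt_of_le (by norm_num) hℓ2
  have hfmeq : c * fl * fml = fm := by
    rw [hc, hfl, hfml, hfm]; exact_mod_cast hfact
  have hkeyR : (Nat.card {π : Equiv.Perm (Fin m) | HasMonotoneSubseq π ℓ} : ℝ)
      ≤ 2 * (c * (fml * c)) := by rw [hc, hfml]; exact_mod_cast key
  have step3 : c * fl ≤ (m : ℝ) ^ ℓ := by
    have : (ℓ)! * m.choose ℓ ≤ m ^ ℓ := by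
      rw [← Nat.descFactorial_eq_factorial_mul_choose]
      exact Nat.descFactorial_le_pow m ℓ
    have h' : fl * c ≤ (m:ℝ) ^ ℓ := by
      rw [hfl, hc]; exact_mod_cast this
    linarith
  have h1 : (m : ℝ) ≤ (L / (2 * E)) ^ 2 := by
    have hn24 : (n : ℝ) ≤ 24 * L := by
      have : n ≤ 24 * ℓ := by omega
      rw [hL]; exact_mod_cast this
    refine hm.trans ?_
    apply pow_le_pow_left₀ (by positivity)
    rw [div_le_div_iff₀ (by positivity) (by positivity)]
    nlinarith
  have h2 : (L / E) ^ ℓ ≤ fl := by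
    have h := Real.pow_div_factorial_le_exp (x := L) (by positivity) ℓ
    have hexp : Real.exp L = E ^ ℓ := by
      rw [hL, hE, show ((ℓ:ℝ)) = (ℓ:ℝ) * 1 by ring, Real.exp_nat_mul]
    rw [hexp, div_le_iff₀ hflpos] at h
    rw [div_pow, div_le_iff₀ (by positivity)]
    linarith
  have step5 : 2 * (m : ℝ) ^ ℓ / fl ^ 2
      ≤ 2 * ((L / (2 * E)) ^ 2) ^ ℓ / ((L / E) ^ ℓ) ^ 2 := by
    apply div_le_div₀ (by positivity)
    · have := pow_le_pow_left₀ (by positivity : (0:ℝ) ≤ (m:ℝ)) h1 ℓ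
      linarith
    · positivity
    · apply pow_le_pow_left₀ (by positivity) h2
  have step6 : 2 * ((L / (2 * E)) ^ 2) ^ ℓ / ((L / E) ^ ℓ) ^ 2 = 2 * ((1:ℝ)/4) ^ ℓ := by
    have hEne : E ≠ 0 := ne_of_gt he
    have hDpos : (0:ℝ) < ((L / E) ^ ℓ) ^ 2 := by positivity
    have hbase : (L / (2 * E)) ^ 2 = (1/4) * (L / E) ^ 2 := by
      field_simp; ring
    rw [hbase, mul_pow,
      show ((L / E) ^ 2) ^ ℓ = ((L / E) ^ ℓ) ^ 2 from by
        rw [← pow_mul, ← pow_mul, Nat.mul_comm],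
      mul_div_assoc, mul_div_assoc, div_self (ne_of_gt hDpos), mul_one]
  have step7 : 2 * ((1:ℝ)/4) ^ ℓ ≤ 8 * (4:ℝ) ^ (-(n : ℝ) / 12) := by
    have ha : ((1:ℝ)/4) ^ ℓ = (4:ℝ) ^ (-(L)) := by
      rw [hL, Real.rpow_neg (by norm_num), Real.rpow_natCast]
      simp [one_div, inv_pow]
    have hb : (4:ℝ) ^ (-(L)) ≤ (4:ℝ) ^ ((1:ℝ) - (n:ℝ)/12) := by
      apply Real.rpow_le_rpow_of_exponent_le (by norm_num)
      have hn' : (n : ℝ) ≤ 12 * L + 11 := by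
        have : n ≤ 12 * ℓ + 11 := by omega
        rw [hL]; exact_mod_cast this
      linarith
    have hcg : (4:ℝ) ^ ((1:ℝ) - (n:ℝ)/12) = 4 * (4:ℝ) ^ (-(n:ℝ)/12) := by
      rw [show (1:ℝ) - (n:ℝ)/12 = 1 + (-(n:ℝ)/12) by ring,
        Real.rpow_add (by norm_num), Real.rpow_one]
    rw [ha]
    nlinarith [hb.trans_eq hcg]
  calc (Nat.card {π : Equiv.Perm (Fin m) | HasMonotoneSubseq π ℓ} : ℝ) / fm
      ≤ (2 * (c * (fml * c))) / fm := by gcongr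
    _ = 2 * c / fl := by rw [← hfmeq]; field_simp
    _ ≤ 2 * (m : ℝ) ^ ℓ / fl ^ 2 := by
        rw [div_le_div_iff₀ hflpos (by positivity)]
        nlinarith
    _ ≤ 2 * ((L / (2 * E)) ^ 2) ^ ℓ / ((L / E) ^ ℓ) ^ 2 := step5
    _ = 2 * ((1:ℝ)/4) ^ ℓ := step6
    _ ≤ 8 * (4:ℝ) ^ (-(n : ℝ) / 12) := step7
end

section
/- Let m and ℓ be natural numbers with 2 ≤ ℓ ≤ m. The number of permutations π of Fin m that contain a monotone subsequence of length ℓ is at most 2 · C(m, ℓ) · m!/ℓ!, where C(m, ℓ) is the binomial coefficient. -/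
/-- Two permutations agreeing off `S`, with the same monotonicity behaviour on `S`
and the same image of `S`, are equal. -/
lemma mono_on_set_uniq {m ℓ : ℕ} (S : Finset (Fin m)) (hS : S.card = ℓ)
    (π π' : Equiv.Perm (Fin m)) (b : Bool)
    (hmono : if b then StrictMono (fun i => π (S.orderEmbOfFin hS i))
             else StrictAnti (fun i => π (S.orderEmbOfFin hS i)))
    (hmono' : if b then StrictMono (fun i => π' (S.orderEmbOfFin hS i))
             else StrictAnti (fun i => π' (S.orderEmbOfFin hS i)))
    (hoff : ∀ x ∉ S, π x = π' x)
    (himg : S.image π = S.image π') : π = π' := by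
  classical
  have hV : (S.image (π : Fin m → Fin m)).card = ℓ := by
    rw [Finset.card_image_of_injective _ π.injective, hS]
  have hV' : (S.image (π' : Fin m → Fin m)).card = ℓ := by
    rw [Finset.card_image_of_injective _ π'.injective, hS]
  set g := S.orderEmbOfFin hS with hg
  have hmem : ∀ i, g i ∈ S := fun i => Finset.orderEmbOfFin_mem S hS i
  have key : ∀ i : Fin ℓ, π (g i) = π' (g i) := by
    cases b with
    | true =>
      simp only [if_pos] at hmono hmono'
      have h1 : (fun i => π (g i)) = (S.image (π : Fin m → Fin m)).orderEmbOfFin hV :=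
        Finset.orderEmbOfFin_unique hV (fun i => Finset.mem_image_of_mem _ (hmem i)) hmono
      have h2 : (fun i => π' (g i)) = (S.image (π : Fin m → Fin m)).orderEmbOfFin hV := by
        refine Finset.orderEmbOfFin_unique hV (fun i => ?_) hmono'
        rw [himg]; exact Finset.mem_image_of_mem _ (hmem i)
      intro i
      rw [show π (g i) = (fun i => π (g i)) i from rfl, h1,
        show π' (g i) = (fun i => π' (g i)) i from rfl, h2]
    | false =>
      rw [if_neg (by simp)] at hmono; rw [if_neg (by simp)] at hmono'
      have hrev : StrictAnti (Fin.rev : Fin ℓ → Fin ℓ) := fun i j h => Fin.rev_lt_rev.mpr h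
      have h1 : (fun i => π (g (Fin.rev i))) = (S.image (π : Fin m → Fin m)).orderEmbOfFin hV :=
        Finset.orderEmbOfFin_unique hV (fun i => Finset.mem_image_of_mem _ (hmem _))
          (hmono.comp hrev)
      have h2 : (fun i => π' (g (Fin.rev i))) = (S.image (π : Fin m → Fin m)).orderEmbOfFin hV := by
        refine Finset.orderEmbOfFin_unique hV (fun i => ?_) (hmono'.comp hrev)
        rw [himg]; exact Finset.mem_image_of_mem _ (hmem _)
      intro i
      have e1 : π (g i) = (fun j => π (g (Fin.rev j))) (Fin.rev i) := by simp
      have e2 : π' (g i) = (fun j => π' (g (Fin.rev j))) (Fin.rev i) := by simp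
      rw [e1, h1, e2, h2]
  refine Equiv.ext fun x => ?_
  by_cases hx : x ∈ S
  · obtain ⟨i, rfl⟩ : ∃ i, g i = x := by
      have := Finset.range_orderEmbOfFin S hS
      have : x ∈ Set.range (S.orderEmbOfFin hS) := by rw [this]; exact_mod_cast hx
      exact this
    exact key i
  · exact hoff x hx

lemma key_count (m ℓ : ℕ) :
    Nat.card {π : Equiv.Perm (Fin m) | HasMonotoneSubseq π ℓ} * ℓ.factorial ≤
      2 * m.choose ℓ * m.factorial := by
  classical
  -- the set of witnesses
  let A := {π : Equiv.Perm (Fin m) | HasMonotoneSubseq π ℓ}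
  -- for each π in A, chosen data
  let f : ∀ p : A, Fin ℓ → Fin m := fun p => p.2.choose
  have hf : ∀ p : A, StrictMono (f p) := fun p => p.2.choose_spec.1
  let S : A → Finset (Fin m) := fun p => Finset.univ.map ⟨f p, (hf p).injective⟩
  have hS : ∀ p : A, (S p).card = ℓ := fun p => by simp [S]
  have hfg : ∀ p : A, f p = (S p).orderEmbOfFin (hS p) := fun p =>
    Finset.orderEmbOfFin_unique (hS p) (fun i => by simp [S]) (hf p)
  let b : A → Bool := fun p =>
    if StrictMono (fun i => (p.1 : Equiv.Perm (Fin m)) (f p i)) then true else false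
  have hb : ∀ p : A, if b p then StrictMono (fun i => p.1 ((S p).orderEmbOfFin (hS p) i))
      else StrictAnti (fun i => p.1 ((S p).orderEmbOfFin (hS p) i)) := by
    intro p
    by_cases h : StrictMono (fun i => (p.1 : Equiv.Perm (Fin m)) (f p i))
    · rw [if_pos (by simp [b, h]), ← hfg p]; exact h
    · rw [if_neg (by simp [b, h]), ← hfg p]
      rcases p.2.choose_spec.2 with h' | h'
      · exact absurd h' h
      · exact h'
  -- the injection
  let e : ∀ p : A, Equiv.Perm (Fin ℓ) → Equiv.Perm (Fin m) := fun p τ =>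
    τ.extendDomain ((S p).orderIsoOfFin (hS p)).toEquiv
  have he_mem : ∀ (p : A) (τ) (x : Fin m), x ∈ S p → e p τ x ∈ S p := by
    intro p τ x hx
    set g := ((S p).orderIsoOfFin (hS p)).toEquiv with hgdef
    have h := Equiv.Perm.extendDomain_apply_image τ g (g.symm ⟨x, hx⟩)
    simp only [Equiv.apply_symm_apply] at h
    rw [show e p τ x = ((g (τ (g.symm ⟨x, hx⟩))) : Fin m) from h]
    exact (g (τ (g.symm ⟨x, hx⟩))).2
  have he_not : ∀ (p : A) (τ) (x : Fin m), x ∉ S p → e p τ x = x := fun p τ x hx =>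
    Equiv.Perm.extendDomain_apply_not_subtype τ _ hx
  have he_img : ∀ (p : A) (τ), (S p).image (e p τ) = S p := by
    intro p τ
    refine Finset.eq_of_subset_of_card_le (fun x hx => ?_) ?_
    · obtain ⟨y, hy, rfl⟩ := Finset.mem_image.1 hx; exact he_mem p τ y hy
    · rw [Finset.card_image_of_injective _ (e p τ).injective]
  let F : A × Equiv.Perm (Fin ℓ) →
      Bool × {T : Finset (Fin m) // T.card = ℓ} × Equiv.Perm (Fin m) :=
    fun q => (b q.1, ⟨S q.1, hS q.1⟩, (e q.1 q.2).trans q.1.1)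
  have hFinj : Function.Injective F := by
    rintro ⟨p, τ⟩ ⟨p', τ'⟩ hq
    simp only [F, Prod.mk.injEq, Subtype.mk.injEq] at hq
    obtain ⟨hb1, hS1, hσ⟩ := hq
    have hππ' : (p.1 : Equiv.Perm (Fin m)) = p'.1 := by
      have himg : (S p).image p.1 = (S p).image p'.1 := by
        have h1 : (S p).image (⇑((e p τ).trans p.1)) = (S p).image ⇑(p.1 : Equiv.Perm (Fin m)) := by
          conv_rhs => rw [← he_img p τ]
          rw [Finset.image_image, Equiv.coe_trans]
        have h2 : (S p').image (⇑((e p' τ').trans p'.1)) =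
            (S p').image ⇑(p'.1 : Equiv.Perm (Fin m)) := by
          conv_rhs => rw [← he_img p' τ']
          rw [Finset.image_image, Equiv.coe_trans]
        rw [← h1, hσ, ← hS1] at *
        rw [← hS1] at h2
        rw [h2]
      refine mono_on_set_uniq (S p) (hS p) p.1 p'.1 (b p) (hb p) ?_ ?_ himg
      · have hemb : ⇑((S p').orderEmbOfFin (hS p')) = ⇑((S p).orderEmbOfFin (hS p)) :=
          Finset.orderEmbOfFin_unique (hS p)
            (fun i => by rw [hS1]; exact Finset.orderEmbOfFin_mem _ _ _)
            ((S p').orderEmbOfFin (hS p')).strictMono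
        have := hb p'
        rw [← hb1, hemb] at this
        exact this
      · intro x hx
        have := congrArg (fun σ : Equiv.Perm (Fin m) => σ x) hσ
        simp only [Equiv.trans_apply] at this
        rwa [he_not p τ x hx, he_not p' τ' x (hS1 ▸ hx)] at this
    have hpp' : p = p' := Subtype.ext hππ'
    subst hpp'
    have hee : e p τ = e p τ' := by
      have := congrArg (fun σ => σ.trans (p.1 : Equiv.Perm (Fin m)).symm) hσ
      simpa [hππ', Equiv.trans_assoc] using this
    have : τ = τ' := by
      have hinj := Equiv.Perm.extendDomainHom_injective
        (((S p).orderIsoOfFin (hS p)).toEquiv : Fin ℓ ≃ {x // x ∈ S p})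
      exact hinj hee
    simp [this]
  have hcard := Nat.card_le_card_of_injective F hFinj
  have hA : Nat.card (A × Equiv.Perm (Fin ℓ)) = Nat.card A * ℓ.factorial := by
    rw [Nat.card_prod]
    congr 1
    rw [Nat.card_eq_fintype_card, Fintype.card_perm, Fintype.card_fin]
  have hB : Nat.card (Bool × {T : Finset (Fin m) // T.card = ℓ} × Equiv.Perm (Fin m)) =
      2 * m.choose ℓ * m.factorial := by
    simp only [Nat.card_prod, Nat.card_eq_fintype_card, Fintype.card_perm,
      Fintype.card_finset_len, Fintype.card_bool, Fintype.card_fin, mul_assoc, Fintype.card_prod]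
  rw [hA, hB] at hcard
  exact hcard

theorem stmt2 (m ℓ : ℕ) (hℓ : 2 ≤ ℓ) (hm : ℓ ≤ m) :
    (Nat.card {π : Equiv.Perm (Fin m) | HasMonotoneSubseq π ℓ} : ℝ) ≤
      2 * (Nat.choose m ℓ : ℝ) * (Nat.factorial m : ℝ) / (Nat.factorial ℓ : ℝ) := by
  rw [le_div_iff₀ (by positivity : (0:ℝ) < (Nat.factorial ℓ : ℝ))]
  exact_mod_cast key_count m ℓ
end

section
/- Let m and ℓ be natural numbers with 1 ≤ ℓ ≤ m, and suppose (ℓ : ℝ) ≥ 2·e·√m, where e = exp(1). Then, as real numbers, C(m, ℓ) · 2/ℓ! ≤ 2 · 4^{−ℓ}. -/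
theorem stmt5 (m ℓ : ℕ) (h1 : 1 ≤ ℓ) (hm : ℓ ≤ m)
    (hℓ : 2 * Real.exp 1 * Real.sqrt m ≤ (ℓ : ℝ)) :
    (Nat.choose m ℓ : ℝ) * 2 / (Nat.factorial ℓ : ℝ) ≤ 2 * (4 : ℝ) ^ (-(ℓ : ℝ)) := by
  set L : ℝ := (ℓ : ℝ) with hLdef
  set M : ℝ := (m : ℝ) with hMdef
  set E : ℝ := Real.exp 1 with hEdef
  set F : ℝ := (Nat.factorial ℓ : ℝ) with hFdef
  set c : ℝ := (Nat.choose m ℓ : ℝ) with hcdef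
  have hF : 0 < F := by positivity
  have hE : 0 < E := Real.exp_pos 1
  have hl0 : 0 < ℓ := h1
  have hLpos : 0 < L := by rw [hLdef]; exact_mod_cast hl0
  have hMnn : (0:ℝ) ≤ M := by positivity
  have hcnn : (0:ℝ) ≤ c := by positivity
  -- choose * factorial ≤ m^ℓ
  have hc : c * F ≤ M ^ ℓ := by
    have h := Nat.descFactorial_le_pow m ℓ
    rw [Nat.descFactorial_eq_factorial_mul_choose] at h
    have : (Nat.factorial ℓ * Nat.choose m ℓ : ℝ) ≤ (m:ℝ) ^ ℓ := by exact_mod_cast h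
    linarith [this]
  -- Stirling-type bound: L^ℓ ≤ E^ℓ * F
  have hS : L ^ ℓ ≤ E ^ ℓ * F := by
    have h := Real.pow_div_factorial_le_exp (x := L) (le_of_lt hLpos) ℓ
    have hexp : Real.exp L = E ^ ℓ := by
      rw [hEdef, ← Real.exp_nat_mul, mul_one]
    rw [div_le_iff₀ hF, hexp] at h
    exact h
  -- key : M * E^2 ≤ 1/4 * (L*L)
  have hs : Real.sqrt M ^ 2 = M := Real.sq_sqrt hMnn
  have hsqnn : (0:ℝ) ≤ 2 * E * Real.sqrt M := by positivity
  have hkey : M * E ^ 2 ≤ 1/4 * (L * L) := by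
    have h2 := mul_le_mul hℓ hℓ hsqnn (le_of_lt hLpos)
    nlinarith [h2, hs]
  -- raise to power ℓ
  have hmain : c * (L ^ ℓ * L ^ ℓ) ≤ (1/4) ^ ℓ * F * (L ^ ℓ * L ^ ℓ) := by
    have hMe : (M * E ^ 2) ^ ℓ ≤ (1/4 * (L * L)) ^ ℓ :=
      pow_le_pow_left₀ (by positivity) hkey ℓ
    calc c * (L ^ ℓ * L ^ ℓ) ≤ c * ((E ^ ℓ * F) * (E ^ ℓ * F)) := by
          apply mul_le_mul_of_nonneg_left _ hcnn
          exact mul_le_mul hS hS (by positivity) (by positivity)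
      _ = (c * F) * (E ^ ℓ * E ^ ℓ * F) := by ring
      _ ≤ M ^ ℓ * (E ^ ℓ * E ^ ℓ * F) := by
          apply mul_le_mul_of_nonneg_right hc (by positivity)
      _ = (M * E ^ 2) ^ ℓ * F := by rw [mul_pow, sq, mul_pow]; ring
      _ ≤ (1/4 * (L * L)) ^ ℓ * F := by
          apply mul_le_mul_of_nonneg_right hMe (le_of_lt hF)
      _ = (1/4) ^ ℓ * F * (L ^ ℓ * L ^ ℓ) := by rw [mul_pow, mul_pow]; ring
  have hcle : c ≤ (1/4) ^ ℓ * F :=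
    le_of_mul_le_mul_right hmain (by positivity)
  have h4 : (4:ℝ) ^ (-(ℓ:ℝ)) = (1/4 : ℝ) ^ ℓ := by
    rw [Real.rpow_neg (by norm_num), Real.rpow_natCast, ← inv_pow, one_div]
  rw [div_le_iff₀ hF, h4]
  nlinarith [hcle, hF]
end

section
/- Let k ≥ 1 and let a, b, c, d : Fin k → ℝ be sequences with a_i < b_i and c_i < d_i for all i, such that the boxes [a_i, b_i] × [c_i, d_i] are strictly nested: for all i < j, a_i < a_j, b_j < b_i, c_i < c_j, and d_j < d_i. For each i, let p_i be one of the four corners (a_i, c_i), (a_i, d_i), (b_i, c_i), (b_i, d_i) of the i-th box. Then there exists a subset s ⊆ Fin k with |s| ≥ k/2 such that the set {p_i : i ∈ s} is monotone. More precisely, the set of those p_i that are bottom-left or top-right corners is increasing, the set of those p_i that are top-left or bottom-right corners is decreasing, and one of these two sets has cardinality at least ⌈k/2⌉. -/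
theorem stmt8 (k : ℕ) (hk : 1 ≤ k) (a b c d : Fin k → ℝ)
    (hab : ∀ i, a i < b i) (hcd : ∀ i, c i < d i)
    (hnest : ∀ i j : Fin k, i < j → a i < a j ∧ b j < b i ∧ c i < c j ∧ d j < d i)
    (p : Fin k → ℝ × ℝ)
    (hp : ∀ i, p i = (a i, c i) ∨ p i = (a i, d i) ∨ p i = (b i, c i) ∨ p i = (b i, d i)) :
    -- the set of chosen bottom-left / top-right corners is increasing
    (DistinctCoords (p '' {i | p i = (a i, c i) ∨ p i = (b i, d i)}) ∧
      IncreasingPts (p '' {i | p i = (a i, c i) ∨ p i = (b i, d i)})) ∧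
    -- the set of chosen top-left / bottom-right corners is decreasing
    (DistinctCoords (p '' {i | p i = (a i, d i) ∨ p i = (b i, c i)}) ∧
      DecreasingPts (p '' {i | p i = (a i, d i) ∨ p i = (b i, c i)})) ∧
    -- one of the two sets has cardinality at least ⌈k/2⌉
    ((k + 1) / 2 ≤ (p '' {i | p i = (a i, c i) ∨ p i = (b i, d i)}).ncard ∨
      (k + 1) / 2 ≤ (p '' {i | p i = (a i, d i) ∨ p i = (b i, c i)}).ncard) ∧
    -- hence some index set `s` with `|s| ≥ k/2` yields a monotone point set
    (∃ s : Set (Fin k), k ≤ 2 * s.ncard ∧ MonotonePts (p '' s)) := by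
  have key : ∀ i j : Fin k, i < j →
      a i < (p j).1 ∧ (p j).1 < b i ∧ c i < (p j).2 ∧ (p j).2 < d i := by
    intro i j hij
    obtain ⟨h1, h2, h3, h4⟩ := hnest i j hij
    have h5 := hab j; have h6 := hcd j
    rcases hp j with h | h | h | h <;> rw [h] <;>
      exact ⟨by simp; linarith, by simp; linarith, by simp; linarith, by simp; linarith⟩
  have pinj : Function.Injective p := by
    intro i j hij
    by_contra hne
    rcases lt_or_gt_of_ne hne with h | h
    · obtain ⟨k1, k2, _, _⟩ := key i j h
      rcases hp i with hh | hh | hh | hh <;> rw [hh] at hij <;> rw [← hij] at k1 k2 <;>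
        simp at k1 k2 <;> linarith [hab i]
    · obtain ⟨k1, k2, _, _⟩ := key j i h
      rcases hp j with hh | hh | hh | hh <;> rw [hh] at hij <;> rw [hij] at k1 k2 <;>
        simp at k1 k2 <;> linarith [hab j]
  set S1 : Set (Fin k) := {i | p i = (a i, c i) ∨ p i = (b i, d i)} with hS1
  set S2 : Set (Fin k) := {i | p i = (a i, d i) ∨ p i = (b i, c i)} with hS2
  have inc : ∀ i j : Fin k, i < j → i ∈ S1 →
      ((p i).1 < (p j).1 ∧ (p i).2 < (p j).2) ∨ ((p j).1 < (p i).1 ∧ (p j).2 < (p i).2) := by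
    intro i j hij hi
    obtain ⟨k1, k2, k3, k4⟩ := key i j hij
    rcases hi with h | h <;> rw [h]
    · left; exact ⟨k1, k3⟩
    · right; exact ⟨k2, k4⟩
  have dec : ∀ i j : Fin k, i < j → i ∈ S2 →
      ((p i).1 < (p j).1 ∧ (p j).2 < (p i).2) ∨ ((p j).1 < (p i).1 ∧ (p i).2 < (p j).2) := by
    intro i j hij hi
    obtain ⟨k1, k2, k3, k4⟩ := key i j hij
    rcases hi with h | h <;> rw [h]
    · left; exact ⟨k1, k4⟩
    · right; exact ⟨k2, k3⟩
  have part1 : DistinctCoords (p '' S1) ∧ IncreasingPts (p '' S1) := by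
    constructor
    · rintro q ⟨i, hi, rfl⟩ r ⟨j, hj, rfl⟩ hne
      have hij : i ≠ j := fun h => hne (by rw [h])
      rcases lt_or_gt_of_ne hij with h | h
      · rcases inc i j h hi with ⟨x, y⟩ | ⟨x, y⟩
        · exact ⟨ne_of_lt x, ne_of_lt y⟩
        · exact ⟨(ne_of_lt x).symm, (ne_of_lt y).symm⟩
      · rcases inc j i h hj with ⟨x, y⟩ | ⟨x, y⟩
        · exact ⟨(ne_of_lt x).symm, (ne_of_lt y).symm⟩
        · exact ⟨ne_of_lt x, ne_of_lt y⟩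
    · rintro q ⟨i, hi, rfl⟩ r ⟨j, hj, rfl⟩ hlt
      rcases lt_trichotomy i j with h | h | h
      · rcases inc i j h hi with ⟨x, y⟩ | ⟨x, y⟩
        · exact y
        · linarith
      · rw [h] at hlt; linarith
      · rcases inc j i h hj with ⟨x, y⟩ | ⟨x, y⟩ <;> linarith
  have part2 : DistinctCoords (p '' S2) ∧ DecreasingPts (p '' S2) := by
    constructor
    · rintro q ⟨i, hi, rfl⟩ r ⟨j, hj, rfl⟩ hne
      have hij : i ≠ j := fun h => hne (by rw [h])
      rcases lt_or_gt_of_ne hij with h | h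
      · rcases dec i j h hi with ⟨x, y⟩ | ⟨x, y⟩
        · exact ⟨ne_of_lt x, (ne_of_lt y).symm⟩
        · exact ⟨(ne_of_lt x).symm, ne_of_lt y⟩
      · rcases dec j i h hj with ⟨x, y⟩ | ⟨x, y⟩
        · exact ⟨(ne_of_lt x).symm, ne_of_lt y⟩
        · exact ⟨ne_of_lt x, (ne_of_lt y).symm⟩
    · rintro q ⟨i, hi, rfl⟩ r ⟨j, hj, rfl⟩ hlt
      rcases lt_trichotomy i j with h | h | h
      · rcases dec i j h hi with ⟨x, y⟩ | ⟨x, y⟩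
        · exact y
        · linarith
      · rw [h] at hlt; linarith
      · rcases dec j i h hj with ⟨x, y⟩ | ⟨x, y⟩ <;> linarith
  have hunion : S1 ∪ S2 = Set.univ := by
    ext i; simp only [Set.mem_union, Set.mem_univ, iff_true, hS1, hS2, Set.mem_setOf_eq]
    rcases hp i with h | h | h | h <;> tauto
  have hsum : k ≤ S1.ncard + S2.ncard := by
    have := Set.ncard_union_le S1 S2
    rw [hunion] at this
    simpa [Set.ncard_univ] using this
  have himg1 : (p '' S1).ncard = S1.ncard := Set.ncard_image_of_injective _ pinj
  have himg2 : (p '' S2).ncard = S2.ncard := Set.ncard_image_of_injective _ pinj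
  have hcard : (k + 1) / 2 ≤ (p '' S1).ncard ∨ (k + 1) / 2 ≤ (p '' S2).ncard := by
    rw [himg1, himg2]; omega
  refine ⟨part1, part2, hcard, ?_⟩
  rcases hcard with h | h
  · exact ⟨S1, by rw [himg1] at h; omega, part1.1, Or.inl part1.2⟩
  · exact ⟨S2, by rw [himg2] at h; omega, part2.1, Or.inr part2.2⟩
end

section
/- Let U ⊆ ℝ² be a finite set whose points have pairwise distinct x-coordinates and pairwise distinct y-coordinates. Suppose there exist k triangles with vertices in U that are strictly nested: for each i ∈ Fin k there are three points of U whose convex hull T_i satisfies T_{i+1} ⊆ interior(T_i) for all i < k − 1, and each T_i has nonempty interior. Then U contains a monotone subset of cardinality at least ⌈k/2⌉. -/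
section Aux

private lemma aux_interior_lt (s : Set (ℝ × ℝ)) (f : (ℝ × ℝ) →ₗ[ℝ] ℝ)
    (u : ℝ × ℝ) (hu : f u = 1) (hn : ‖u‖ = 1) (M : ℝ)
    (hM : ∀ q ∈ s, f q ≤ M) {p : ℝ × ℝ}
    (hp : p ∈ interior (convexHull ℝ s)) : f p < M := by
  have hsub : convexHull ℝ s ⊆ {q | f q ≤ M} :=
    convexHull_min hM (convex_halfSpace_le f.isLinear M)
  obtain ⟨ε, hε, hball⟩ := Metric.isOpen_iff.mp isOpen_interior p hp
  have hq : p + (ε/2) • u ∈ convexHull ℝ s := by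
    apply interior_subset
    apply hball
    rw [Metric.mem_ball, dist_self_add_left, norm_smul, hn]
    simp only [Real.norm_eq_abs, mul_one, abs_of_pos (half_pos hε)]
    linarith
  have h2 := hsub hq
  simp only [Set.mem_setOf_eq, map_add, map_smul, hu, smul_eq_mul, mul_one] at h2
  linarith

private lemma aux_fst_lt (s : Set (ℝ × ℝ)) (M : ℝ) (hM : ∀ q ∈ s, q.1 ≤ M) {p : ℝ × ℝ}
    (hp : p ∈ interior (convexHull ℝ s)) : p.1 < M :=
  aux_interior_lt s (LinearMap.fst ℝ ℝ ℝ) ((1:ℝ), (0:ℝ)) (by simp)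
    (by simp [Prod.norm_def]) M hM hp

private lemma aux_fst_gt (s : Set (ℝ × ℝ)) (m : ℝ) (hm : ∀ q ∈ s, m ≤ q.1) {p : ℝ × ℝ}
    (hp : p ∈ interior (convexHull ℝ s)) : m < p.1 := by
  have := aux_interior_lt s (-(LinearMap.fst ℝ ℝ ℝ)) ((-1:ℝ), (0:ℝ)) (by simp)
    (by simp [Prod.norm_def]) (-m) (fun q hq => by simpa using hm q hq) hp
  simp only [LinearMap.neg_apply, LinearMap.fst_apply] at this
  linarith

private lemma aux_snd_lt (s : Set (ℝ × ℝ)) (M : ℝ) (hM : ∀ q ∈ s, q.2 ≤ M) {p : ℝ × ℝ}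
    (hp : p ∈ interior (convexHull ℝ s)) : p.2 < M :=
  aux_interior_lt s (LinearMap.snd ℝ ℝ ℝ) ((0:ℝ), (1:ℝ)) (by simp)
    (by simp [Prod.norm_def]) M hM hp

private lemma aux_snd_gt (s : Set (ℝ × ℝ)) (m : ℝ) (hm : ∀ q ∈ s, m ≤ q.2) {p : ℝ × ℝ}
    (hp : p ∈ interior (convexHull ℝ s)) : m < p.2 := by
  have := aux_interior_lt s (-(LinearMap.snd ℝ ℝ ℝ)) ((0:ℝ), (-1:ℝ)) (by simp)
    (by simp [Prod.norm_def]) (-m) (fun q hq => by simpa using hm q hq) hp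
  simp only [LinearMap.neg_apply, LinearMap.snd_apply] at this
  linarith

/-- Every triple of points has a "positive" corner (SW or NE) or a "negative"
corner (NW or SE). -/
private lemma aux_corner (w : Fin 3 → ℝ × ℝ) :
    (∃ a : Fin 3, (∀ b, (w a).1 ≤ (w b).1 ∧ (w a).2 ≤ (w b).2) ∨
                  (∀ b, (w b).1 ≤ (w a).1 ∧ (w b).2 ≤ (w a).2)) ∨
    (∃ a : Fin 3, (∀ b, (w a).1 ≤ (w b).1 ∧ (w b).2 ≤ (w a).2) ∨
                  (∀ b, (w b).1 ≤ (w a).1 ∧ (w a).2 ≤ (w b).2)) := by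
  obtain ⟨a0, -, h0⟩ := Finset.exists_min_image Finset.univ (fun b => (w b).1)
    ⟨0, Finset.mem_univ 0⟩
  obtain ⟨a1, -, h1⟩ := Finset.exists_max_image Finset.univ (fun b => (w b).1)
    ⟨0, Finset.mem_univ 0⟩
  simp only [Finset.mem_univ, forall_const, forall_true_left] at h0 h1
  by_cases hA : ∀ b, (w a0).2 ≤ (w b).2
  · exact Or.inl ⟨a0, Or.inl fun b => ⟨h0 b, hA b⟩⟩
  by_cases hB : ∀ b, (w b).2 ≤ (w a0).2
  · exact Or.inr ⟨a0, Or.inl fun b => ⟨h0 b, hB b⟩⟩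
  push_neg at hA hB
  obtain ⟨b1, hb1⟩ := hA
  obtain ⟨b2, hb2⟩ := hB
  have ne10 : b1 ≠ a0 := fun h => absurd (h ▸ hb1) (lt_irrefl _)
  have ne20 : b2 ≠ a0 := fun h => absurd (h ▸ hb2) (lt_irrefl _)
  have ne12 : b1 ≠ b2 := fun h => absurd (h ▸ hb1) (not_lt.mpr (le_of_lt hb2))
  have cover : ∀ b : Fin 3, b = a0 ∨ b = b1 ∨ b = b2 := by
    intro b
    have e10 : (b1 : ℕ) ≠ (a0 : ℕ) := fun h => ne10 (Fin.ext h)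
    have e20 : (b2 : ℕ) ≠ (a0 : ℕ) := fun h => ne20 (Fin.ext h)
    have e12 : (b1 : ℕ) ≠ (b2 : ℕ) := fun h => ne12 (Fin.ext h)
    have := b.isLt; have := a0.isLt; have := b1.isLt; have := b2.isLt
    simp only [Fin.ext_iff]
    omega
  have hy2max : ∀ b, (w b).2 ≤ (w b2).2 := by
    intro b
    rcases cover b with rfl | rfl | rfl
    · exact le_of_lt hb2
    · exact le_of_lt (lt_trans hb1 hb2)
    · exact le_refl _
  have hy1min : ∀ b, (w b1).2 ≤ (w b).2 := by
    intro b
    rcases cover b with rfl | rfl | rfl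
    · exact le_of_lt hb1
    · exact le_refl _
    · exact le_of_lt (lt_trans hb1 hb2)
  rcases cover a1 with h | h | h
  · -- all x-coordinates are equal
    have hxeq : ∀ b, (w b).1 = (w a0).1 := fun b => le_antisymm (h ▸ h1 b) (h0 b)
    exact Or.inl ⟨b2, Or.inr fun b => ⟨(hxeq b).le.trans (hxeq b2).ge, hy2max b⟩⟩
  · exact Or.inr ⟨b1, Or.inr fun b => ⟨h ▸ h1 b, hy1min b⟩⟩
  · exact Or.inl ⟨b2, Or.inr fun b => ⟨h ▸ h1 b, hy2max b⟩⟩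

/-- Build the monotone set from corners along a relation `R` on y-coordinates. -/
private lemma aux_build (U : Finset (ℝ × ℝ)) {k : ℕ} (T : Finset (Fin k))
    (p : Fin k → ℝ × ℝ) (hpU : ∀ i, p i ∈ U)
    (R : ℝ → ℝ → Prop) (hR : ∀ a b : ℝ, R a b → a ≠ b)
    (hd : ∀ i j : Fin k, i ∈ T → j ∈ T → (i : ℕ) < (j : ℕ) →
      ((p i).1 < (p j).1 ∧ R (p i).2 (p j).2) ∨
      ((p j).1 < (p i).1 ∧ R (p j).2 (p i).2)) :
    ∃ S : Finset (ℝ × ℝ), S ⊆ U ∧ T.card ≤ S.card ∧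
      DistinctCoords (↑S : Set (ℝ × ℝ)) ∧
      (∀ a ∈ (↑S : Set (ℝ × ℝ)), ∀ b ∈ (↑S : Set (ℝ × ℝ)), a.1 < b.1 → R a.2 b.2) := by
  have hinj : Set.InjOn p ↑T := by
    intro i hi j hj hij
    by_contra hne
    rcases Nat.lt_trichotomy (i : ℕ) (j : ℕ) with h | h | h
    · rcases hd i j hi hj h with ⟨hx, -⟩ | ⟨hx, -⟩ <;> rw [hij] at hx <;>
        exact absurd hx (lt_irrefl _)
    · exact hne (Fin.ext h)
    · rcases hd j i hj hi h with ⟨hx, -⟩ | ⟨hx, -⟩ <;> rw [hij] at hx <;>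
        exact absurd hx (lt_irrefl _)
  refine ⟨T.image p, ?_, ?_, ?_, ?_⟩
  · intro x hx
    obtain ⟨i, -, rfl⟩ := Finset.mem_image.mp hx
    exact hpU i
  · rw [Finset.card_image_of_injOn hinj]
  · intro a ha b hb hab
    obtain ⟨i, hi, rfl⟩ := Finset.mem_image.mp (by exact_mod_cast ha)
    obtain ⟨j, hj, rfl⟩ := Finset.mem_image.mp (by exact_mod_cast hb)
    rcases Nat.lt_trichotomy (i : ℕ) (j : ℕ) with h | h | h
    · rcases hd i j hi hj h with ⟨hx, hy⟩ | ⟨hx, hy⟩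
      · exact ⟨ne_of_lt hx, hR _ _ hy⟩
      · exact ⟨(ne_of_lt hx).symm, (hR _ _ hy).symm⟩
    · exact absurd (congrArg p (Fin.ext h)) hab
    · rcases hd j i hj hi h with ⟨hx, hy⟩ | ⟨hx, hy⟩
      · exact ⟨(ne_of_lt hx).symm, (hR _ _ hy).symm⟩
      · exact ⟨ne_of_lt hx, hR _ _ hy⟩
  · intro a ha b hb hab
    obtain ⟨i, hi, rfl⟩ := Finset.mem_image.mp (by exact_mod_cast ha)
    obtain ⟨j, hj, rfl⟩ := Finset.mem_image.mp (by exact_mod_cast hb)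
    rcases Nat.lt_trichotomy (i : ℕ) (j : ℕ) with h | h | h
    · rcases hd i j hi hj h with ⟨hx, hy⟩ | ⟨hx, hy⟩
      · exact hy
      · exact absurd hab (not_lt.mpr (le_of_lt hx))
    · exact absurd hab (Fin.ext h ▸ lt_irrefl _)
    · rcases hd j i hj hi h with ⟨hx, hy⟩ | ⟨hx, hy⟩
      · exact absurd hab (not_lt.mpr (le_of_lt hx))
      · exact hy

end Aux

theorem stmt9 (U : Finset (ℝ × ℝ)) (hU : DistinctCoords (↑U : Set (ℝ × ℝ)))
    (k : ℕ) (v : Fin k → Fin 3 → ℝ × ℝ) (hv : ∀ i j, v i j ∈ U)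
    (hint : ∀ i : Fin k, (interior (convexHull ℝ (Set.range (v i)))).Nonempty)
    (hnest : ∀ i : Fin k, ∀ h : (i : ℕ) + 1 < k,
      convexHull ℝ (Set.range (v ⟨(i : ℕ) + 1, h⟩)) ⊆
        interior (convexHull ℝ (Set.range (v i)))) :
    ∃ S : Finset (ℝ × ℝ), S ⊆ U ∧ (k + 1) / 2 ≤ S.card ∧
      MonotonePts (↑S : Set (ℝ × ℝ)) := by
  classical
  -- transitive nesting
  have nestN : ∀ (n : ℕ) (i j : Fin k), (j : ℕ) = (i : ℕ) + n + 1 →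
      convexHull ℝ (Set.range (v j)) ⊆ interior (convexHull ℝ (Set.range (v i))) := by
    intro n
    induction n with
    | zero =>
      intro i j hj
      have h : (i : ℕ) + 1 < k := by have := j.isLt; omega
      have hje : j = ⟨(i : ℕ) + 1, h⟩ := Fin.ext (by simpa using hj)
      rw [hje]
      exact hnest i h
    | succ n ih =>
      intro i j hj
      have h : (i : ℕ) + 1 < k := by have := j.isLt; omega
      refine (ih ⟨(i : ℕ) + 1, h⟩ j (by simp; omega)).trans ?_
      exact interior_subset.trans (hnest i h)
  have nst : ∀ i j : Fin k, (i : ℕ) < (j : ℕ) →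
      convexHull ℝ (Set.range (v j)) ⊆ interior (convexHull ℝ (Set.range (v i))) := by
    intro i j hij
    exact nestN ((j : ℕ) - (i : ℕ) - 1) i j (by omega)
  -- choose corners
  have hcor : ∀ i : Fin k, ∃ (a : Fin 3) (s : Bool),
      (s = true → ((∀ b, (v i a).1 ≤ (v i b).1 ∧ (v i a).2 ≤ (v i b).2) ∨
                   (∀ b, (v i b).1 ≤ (v i a).1 ∧ (v i b).2 ≤ (v i a).2))) ∧
      (s = false → ((∀ b, (v i a).1 ≤ (v i b).1 ∧ (v i b).2 ≤ (v i a).2) ∨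
                    (∀ b, (v i b).1 ≤ (v i a).1 ∧ (v i a).2 ≤ (v i b).2))) := by
    intro i
    rcases aux_corner (v i) with ⟨a, h⟩ | ⟨a, h⟩
    · exact ⟨a, true, fun _ => h, fun h' => by simp at h'⟩
    · exact ⟨a, false, fun h' => by simp at h', fun _ => h⟩
  choose c sgn hcpos hcneg using hcor
  set p : Fin k → ℝ × ℝ := fun i => v i (c i) with hp
  have hpU : ∀ i, p i ∈ U := fun i => hv i (c i)
  have hpint : ∀ i j : Fin k, (i : ℕ) < (j : ℕ) →
      p j ∈ interior (convexHull ℝ (Set.range (v i))) := by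
    intro i j hij
    exact nst i j hij (subset_convexHull ℝ _ (Set.mem_range_self (c j)))
  -- dichotomies
  have dpos : ∀ i j : Fin k, (i : ℕ) < (j : ℕ) → sgn i = true →
      ((p i).1 < (p j).1 ∧ (p i).2 < (p j).2) ∨
      ((p j).1 < (p i).1 ∧ (p j).2 < (p i).2) := by
    intro i j hij hsi
    have hq := hpint i j hij
    rcases hcpos i hsi with hSW | hNE
    · left
      constructor
      · exact aux_fst_gt _ _ (by rintro q ⟨b, rfl⟩; exact (hSW b).1) hq
      · exact aux_snd_gt _ _ (by rintro q ⟨b, rfl⟩; exact (hSW b).2) hq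
    · right
      constructor
      · exact aux_fst_lt _ _ (by rintro q ⟨b, rfl⟩; exact (hNE b).1) hq
      · exact aux_snd_lt _ _ (by rintro q ⟨b, rfl⟩; exact (hNE b).2) hq
  have dneg : ∀ i j : Fin k, (i : ℕ) < (j : ℕ) → sgn i = false →
      ((p i).1 < (p j).1 ∧ (p j).2 < (p i).2) ∨
      ((p j).1 < (p i).1 ∧ (p i).2 < (p j).2) := by
    intro i j hij hsi
    have hq := hpint i j hij
    rcases hcneg i hsi with hNW | hSE
    · left
      constructor
      · exact aux_fst_gt _ _ (by rintro q ⟨b, rfl⟩; exact (hNW b).1) hq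
      · exact aux_snd_lt _ _ (by rintro q ⟨b, rfl⟩; exact (hNW b).2) hq
    · right
      constructor
      · exact aux_fst_lt _ _ (by rintro q ⟨b, rfl⟩; exact (hSE b).1) hq
      · exact aux_snd_gt _ _ (by rintro q ⟨b, rfl⟩; exact (hSE b).2) hq
  -- pigeonhole
  set P : Finset (Fin k) := Finset.univ.filter (fun i => sgn i = true) with hPdef
  set N : Finset (Fin k) := Finset.univ.filter (fun i => ¬ sgn i = true) with hNdef
  have hPN : P.card + N.card = k := by
    rw [hPdef, hNdef, Finset.card_filter_add_card_filter_not, Finset.card_univ,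
      Fintype.card_fin]
  rcases le_or_gt ((k + 1) / 2) P.card with hbig | hsmall
  · obtain ⟨S, hS1, hS2, hS3, hS4⟩ := aux_build U P p hpU (· < ·) (fun a b => ne_of_lt)
      (fun i j hi hj hij => dpos i j hij (Finset.mem_filter.mp hi).2)
    exact ⟨S, hS1, le_trans hbig hS2, hS3, Or.inl hS4⟩
  · have hbig : (k + 1) / 2 ≤ N.card := by omega
    obtain ⟨S, hS1, hS2, hS3, hS4⟩ := aux_build U N p hpU (· > ·)
      (fun a b h => (ne_of_lt h).symm)
      (fun i j hi hj hij => dneg i j hij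
        (Bool.not_eq_true _ ▸ (Finset.mem_filter.mp hi).2 : sgn i = false))
    exact ⟨S, hS1, le_trans hbig hS2, hS3, Or.inr hS4⟩
end
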